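/- Controlled-T verification (final step): the operator |x_1x_2⟩|0⟩ ↦ (1/2) ∑_{y_3,y_4∈Z_2} e^{2πi( y_3y_4/2 + (x_1y_4 + x_1x_2)/8 )} |x_1 x_2 y_4⟩ equals the map |x_1x_2⟩|0⟩ ↦ e^{2πi·x_1x_2/8} |x_1x_2⟩|0⟩; i.e., interference forces y_4 = 0, and the remaining paths constructively sum to the controlled-T phase. -/
import Mathlib

/-- Three-qubit computational basis state `|z₁z₂z₃⟩`. -/
noncomputable def ket3 (z : ZMod 2 × ZMod 2 × ZMod 2) :
    ZMod 2 × ZMod 2 × ZMod 2 → ℂ := fun w => if w = z then 1 else 0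

/-- `e^{2πi t}` for rational `t`. -/
noncomputable def ph (t : ℚ) : ℂ := Complex.exp (2 * (Real.pi : ℂ) * Complex.I * (t : ℂ))

lemma ph_add (a b : ℚ) : ph (a + b) = ph a * ph b := by
  unfold ph; push_cast; rw [mul_add, Complex.exp_add]

lemma ph_half : ph (1/2) = -1 := by
  unfold ph
  push_cast
  rw [show 2 * (Real.pi : ℂ) * Complex.I * (1/2) = Real.pi * Complex.I by ring,
    Complex.exp_pi_mul_I]

lemma ph_half_add (a : ℚ) : ph (1/2 + a) = - ph a := by
  rw [ph_add, ph_half]; ring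

lemma zmod_sum (f : ZMod 2 → (ZMod 2 × ZMod 2 × ZMod 2 → ℂ)) :
    ∑ x : ZMod 2, f x = f 0 + f 1 := by
  rw [show (Finset.univ : Finset (ZMod 2)) = {0, 1} by decide]
  simp [Finset.sum_pair]

/-- controlled-T verification (final step): the operator
`|x₁x₂⟩|0⟩ ↦ (1/2) ∑_{y₃,y₄} e^{2πi(y₃y₄/2 + (x₁y₄ + x₁x₂)/8)} |x₁x₂y₄⟩`
equals `|x₁x₂⟩|0⟩ ↦ e^{2πi x₁x₂/8} |x₁x₂⟩|0⟩`. -/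
theorem stmt15 :
    ∀ x1 x2 : ZMod 2,
      ((1 : ℂ) / 2) •
          ∑ y3 : ZMod 2, ∑ y4 : ZMod 2,
            ph (((y3.val * y4.val : ℕ) : ℚ) / 2
                + ((x1.val * y4.val + x1.val * x2.val : ℕ) : ℚ) / 8) • ket3 (x1, x2, y4)
        = ph (((x1.val * x2.val : ℕ) : ℚ) / 8) • ket3 (x1, x2, 0) := by
  intro x1 x2
  rw [zmod_sum, zmod_sum, zmod_sum]
  have h0 : (ZMod.val (0 : ZMod 2)) = 0 := rfl
  have h1 : (ZMod.val (1 : ZMod 2)) = 1 := rfl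
  simp only [h0, h1, Nat.mul_zero, Nat.zero_mul, Nat.one_mul, Nat.mul_one, Nat.zero_add,
    Nat.cast_zero, zero_div, zero_add]
  have key : ph (((1 : ℕ) : ℚ) / 2 + ((x1.val * 1 + x1.val * x2.val : ℕ) : ℚ) / 8)
      = - ph (((x1.val * 1 + x1.val * x2.val : ℕ) : ℚ) / 8) := by
    rw [show ((1 : ℕ) : ℚ) / 2 = 1/2 by norm_num, ph_half_add]
  simp only [Nat.mul_one] at key ⊢
  rw [key]
  module
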